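/- Let n ∈ ℤ₊ and assume that φ is differentiable on (α,β) with φ′ extending to a function on [α,β] belonging to C_φ^{(n−2)} whenever n ≥ 2 (no condition if n ≤ 1). Then u ∈ C_φ^{(n)} if and only if, for each k = 0, 1, …, n, the function u is k-times differentiable on (α,β) and φ^k · ∂_t^k u extends to a continuous function on [α,β]. -/

import Mathlib

open Real Set Filter Topology

/-- The open interval `(α, β)` of real numbers, where `α β` are extended reals. -/
def EI (α β : EReal) : Set ℝ := {x : ℝ | α < (x : EReal) ∧ (x : EReal) < β}

/-- `u : ℝ → ℝ` (thought of as a function on `(α, β)`) extends to a continuous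
function on `[α, β] ⊆ EReal`. -/
def ContExt (α β : EReal) (u : ℝ → ℝ) : Prop :=
  ∃ g : EReal → ℝ, ContinuousOn g (Set.Icc α β) ∧
    ∀ x : ℝ, x ∈ EI α β → g (x : EReal) = u x

/-- The operator `X u := φ · u′`. -/
noncomputable def Xop (φ u : ℝ → ℝ) : ℝ → ℝ := fun x => φ x * deriv u x

/-- The iterates `X^k u`. -/
noncomputable def Xiter (φ : ℝ → ℝ) : ℕ → (ℝ → ℝ) → (ℝ → ℝ)
  | 0, u => u
  | n + 1, u => Xop φ (Xiter φ n u)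

/-- The space `C_φ^{(n)}`: inductively, `C_φ^{(0)}` consists of the functions having a
continuous extension to `[α, β]`, and `u ∈ C_φ^{(n+1)}` iff `u ∈ C_φ^{(n)}`, `X^n u` is
differentiable on `(α, β)`, and `X^{n+1} u` extends to a continuous function on `[α, β]`. -/
def CN (α β : EReal) (φ : ℝ → ℝ) : ℕ → Set (ℝ → ℝ)
  | 0 => {u | ContExt α β u}
  | n + 1 => {u | u ∈ CN α β φ n ∧
      (∀ x ∈ EI α β, DifferentiableAt ℝ (Xiter φ n u) x) ∧
      ContExt α β (Xiter φ (n + 1) u)}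

/-- The space `C_φ^{(∞)} := ⋂ₙ C_φ^{(n)}`. -/
def Cinf (α β : EReal) (φ : ℝ → ℝ) : Set (ℝ → ℝ) := ⋂ n : ℕ, CN α β φ n

/-- The spaces `C_φ^{(n)}` for `n ∈ ℤ₊ ∪ {∞}`. -/
def CNE (α β : EReal) (φ : ℝ → ℝ) (n : ℕ∞) : Set (ℝ → ℝ) :=
  WithTop.recTopCoe (Cinf α β φ) (fun k => CN α β φ k) n

/-!
On `(α, β)`, `X^k u = ∑_{j ≤ k} c_{k,j} φ^j ∂^j u` with `c_{k,k} = 1`, the coefficients being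
generated from `φ′` by `X`, sums and products. These operations preserve the classes
`C_φ^{(m)}`, so `φ′ ∈ C_φ^{(p)}` gives `c_{k,j} ∈ C_φ^{(p+1+j-k)}`. Hence `X^n u - φ^n ∂^n u` is
a combination of the lower terms `φ^j ∂^j u`, `j < n`, whose coefficients are differentiable for
`n ≤ p + 1` and continuously extendable for `n ≤ p + 2`, and the equivalence follows by
induction on `n`.
-/

lemma Nat.forall_le_succ_iff {p : ℕ → Prop} {n : ℕ} :
    (∀ k ≤ n + 1, p k) ↔ (∀ k ≤ n, p k) ∧ p (n + 1) := by
  simpa only [Nat.lt_succ_iff] using Nat.forall_lt_succ_right (n := n + 1) (p := p)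

variable {α β : EReal} {φ : ℝ → ℝ}

lemma isOpen_EI (α β : EReal) : IsOpen (EI α β) :=
  isOpen_Ioo.preimage continuous_coe_real_ereal

lemma Set.EqOn.eventuallyEq_of_mem_EI {u v : ℝ → ℝ} (h : EqOn u v (EI α β)) {x : ℝ}
    (hx : x ∈ EI α β) : u =ᶠ[𝓝 x] v :=
  h.eventuallyEq_of_mem ((isOpen_EI α β).mem_nhds hx)

namespace ContExt

lemma congr {u v : ℝ → ℝ} (h : ContExt α β u) (huv : EqOn u v (EI α β)) : ContExt α β v :=
  let ⟨g, hg, hgu⟩ := h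
  ⟨g, hg, fun x hx => (hgu x hx).trans (huv hx)⟩

lemma const (c : ℝ) : ContExt α β fun _ => c :=
  ⟨fun _ => c, continuousOn_const, fun _ _ => rfl⟩

lemma add {u v : ℝ → ℝ} (hu : ContExt α β u) (hv : ContExt α β v) :
    ContExt α β fun x => u x + v x :=
  let ⟨g, hg, hgu⟩ := hu
  let ⟨g', hg', hgv⟩ := hv
  ⟨g + g', hg.add hg', fun x hx => by simp [hgu x hx, hgv x hx]⟩

lemma sub {u v : ℝ → ℝ} (hu : ContExt α β u) (hv : ContExt α β v) :
    ContExt α β fun x => u x - v x :=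
  let ⟨g, hg, hgu⟩ := hu
  let ⟨g', hg', hgv⟩ := hv
  ⟨g - g', hg.sub hg', fun x hx => by simp [hgu x hx, hgv x hx]⟩

lemma mul {u v : ℝ → ℝ} (hu : ContExt α β u) (hv : ContExt α β v) :
    ContExt α β fun x => u x * v x :=
  let ⟨g, hg, hgu⟩ := hu
  let ⟨g', hg', hgv⟩ := hv
  ⟨g * g', hg.mul hg', fun x hx => by simp [hgu x hx, hgv x hx]⟩

lemma sum {ι : Type*} (s : Finset ι) {f : ι → ℝ → ℝ} (h : ∀ i ∈ s, ContExt α β (f i)) :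
    ContExt α β fun x => ∑ i ∈ s, f i x := by
  classical
  induction s using Finset.induction_on with
  | empty => simpa using const (α := α) (β := β) 0
  | insert a s ha ih =>
    simp only [Finset.sum_insert ha]
    exact (h a (s.mem_insert_self a)).add (ih fun i hi => h i (s.mem_insert_of_mem hi))

end ContExt

lemma Xop_congr {u v : ℝ → ℝ} (h : EqOn u v (EI α β)) :
    EqOn (Xop φ u) (Xop φ v) (EI α β) := fun x hx => by
  simp only [Xop, (h.eventuallyEq_of_mem_EI hx).deriv_eq]

lemma Xop_const (c : ℝ) : Xop φ (fun _ => c) = 0 := by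
  funext x
  simp [Xop]

lemma Xop_add_apply {u v : ℝ → ℝ} {x : ℝ} (hu : DifferentiableAt ℝ u x)
    (hv : DifferentiableAt ℝ v x) :
    Xop φ (fun y => u y + v y) x = Xop φ u x + Xop φ v x := by
  simp only [Xop, deriv_fun_add hu hv, mul_add]

lemma Xop_mul_apply {u v : ℝ → ℝ} {x : ℝ} (hu : DifferentiableAt ℝ u x)
    (hv : DifferentiableAt ℝ v x) :
    Xop φ (fun y => u y * v y) x = Xop φ u x * v x + u x * Xop φ v x := by
  simp only [Xop, deriv_fun_mul hu hv]
  ring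

lemma Xop_sum_apply {ι : Type*} (s : Finset ι) {f : ι → ℝ → ℝ} {x : ℝ}
    (hf : ∀ i ∈ s, DifferentiableAt ℝ (f i) x) :
    Xop φ (fun y => ∑ i ∈ s, f i y) x = ∑ i ∈ s, Xop φ (f i) x := by
  simp only [Xop, deriv_fun_sum hf, Finset.mul_sum]

lemma Xiter_succ' (k : ℕ) (u : ℝ → ℝ) : Xiter φ (k + 1) u = Xiter φ k (Xop φ u) := by
  induction k with
  | zero => rfl
  | succ k ih => exact congrArg (Xop φ) ih

lemma mem_CN_succ_iff {m : ℕ} {u : ℝ → ℝ} :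
    u ∈ CN α β φ (m + 1) ↔
      ContExt α β u ∧ (∀ x ∈ EI α β, DifferentiableAt ℝ u x) ∧ Xop φ u ∈ CN α β φ m := by
  induction m generalizing u with
  | zero => exact Iff.rfl
  | succ m ih =>
    change (u ∈ CN α β φ (m + 1) ∧ _) ↔ _ ∧ _ ∧ (Xop φ u ∈ CN α β φ m ∧ _)
    rw [ih, Xiter_succ', Xiter_succ' (m + 1)]
    simp only [and_assoc]

lemma CN_antitone : Antitone (CN α β φ) :=
  antitone_nat_of_succ_le fun _ _ hu => hu.1

lemma contExt_of_mem_CN {m : ℕ} {u : ℝ → ℝ} (hu : u ∈ CN α β φ m) : ContExt α β u :=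
  CN_antitone m.zero_le hu

lemma differentiableAt_of_mem_CN {m : ℕ} {u : ℝ → ℝ} (hu : u ∈ CN α β φ (m + 1)) {x : ℝ}
    (hx : x ∈ EI α β) : DifferentiableAt ℝ u x :=
  (mem_CN_succ_iff.mp hu).2.1 x hx

lemma Xop_mem_CN {m : ℕ} {u : ℝ → ℝ} (hu : u ∈ CN α β φ (m + 1)) : Xop φ u ∈ CN α β φ m :=
  (mem_CN_succ_iff.mp hu).2.2

lemma mem_CN_of_eqOn {m : ℕ} {u v : ℝ → ℝ} (hu : u ∈ CN α β φ m) (huv : EqOn u v (EI α β)) :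
    v ∈ CN α β φ m := by
  induction m generalizing u v with
  | zero => exact ContExt.congr hu huv
  | succ m ih =>
    obtain ⟨hcont, hdiff, hX⟩ := mem_CN_succ_iff.mp hu
    exact mem_CN_succ_iff.mpr ⟨hcont.congr huv,
      fun x hx => (huv.eventuallyEq_of_mem_EI hx).differentiableAt_iff.mp (hdiff x hx),
      ih hX (Xop_congr huv)⟩

lemma const_mem_CN (m : ℕ) (c : ℝ) : (fun _ => c) ∈ CN α β φ m := by
  induction m generalizing c with
  | zero => exact ContExt.const c
  | succ m ih =>
    refine mem_CN_succ_iff.mpr ⟨ContExt.const c, fun x _ => differentiableAt_const c, ?_⟩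
    rw [Xop_const]
    exact ih 0

lemma add_mem_CN {m : ℕ} {u v : ℝ → ℝ} (hu : u ∈ CN α β φ m) (hv : v ∈ CN α β φ m) :
    (fun x => u x + v x) ∈ CN α β φ m := by
  induction m generalizing u v with
  | zero => exact ContExt.add hu hv
  | succ m ih =>
    obtain ⟨hu₀, hu₁, hu₂⟩ := mem_CN_succ_iff.mp hu
    obtain ⟨hv₀, hv₁, hv₂⟩ := mem_CN_succ_iff.mp hv
    refine mem_CN_succ_iff.mpr ⟨hu₀.add hv₀, fun x hx => (hu₁ x hx).add (hv₁ x hx), ?_⟩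
    exact mem_CN_of_eqOn (ih hu₂ hv₂) fun x hx => (Xop_add_apply (hu₁ x hx) (hv₁ x hx)).symm

lemma mul_mem_CN {m : ℕ} {u v : ℝ → ℝ} (hu : u ∈ CN α β φ m) (hv : v ∈ CN α β φ m) :
    (fun x => u x * v x) ∈ CN α β φ m := by
  induction m generalizing u v with
  | zero => exact ContExt.mul hu hv
  | succ m ih =>
    obtain ⟨hu₀, hu₁, hu₂⟩ := mem_CN_succ_iff.mp hu
    obtain ⟨hv₀, hv₁, hv₂⟩ := mem_CN_succ_iff.mp hv
    refine mem_CN_succ_iff.mpr ⟨hu₀.mul hv₀, fun x hx => (hu₁ x hx).mul (hv₁ x hx), ?_⟩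
    have hleibniz := add_mem_CN (ih hu₂ (CN_antitone m.le_succ hv))
      (ih (CN_antitone m.le_succ hu) hv₂)
    exact mem_CN_of_eqOn hleibniz fun x hx => (Xop_mul_apply (hu₁ x hx) (hv₁ x hx)).symm

noncomputable def weightedDeriv (φ u : ℝ → ℝ) (k : ℕ) (x : ℝ) : ℝ :=
  φ x ^ k * iteratedDeriv k u x

lemma Xop_weightedDeriv_apply {u : ℝ → ℝ} {j : ℕ} {x : ℝ} (hφ : DifferentiableAt ℝ φ x)
    (hu : DifferentiableAt ℝ (iteratedDeriv j u) x) :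
    Xop φ (weightedDeriv φ u j) x =
      j * deriv φ x * weightedDeriv φ u j x + weightedDeriv φ u (j + 1) x := by
  change Xop φ (fun y => φ y ^ j * iteratedDeriv j u y) x = _
  rw [Xop_mul_apply (u := fun y => φ y ^ j) (hφ.fun_pow j) hu]
  simp only [Xop, weightedDeriv, deriv_fun_pow hφ, iteratedDeriv_succ]
  rcases j with _ | j
  · simp
  · simp only [Nat.add_sub_cancel, pow_succ]
    ring

/-- `X^k u = ∑_{j ≤ k} Xcoeff φ k j · φ^j ∂^j u`; the recursion comes from
`X(c φ^j ∂^j u) = (X c + j φ′ c) φ^j ∂^j u + c φ^{j+1} ∂^{j+1} u`. -/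
noncomputable def Xcoeff (φ : ℝ → ℝ) : ℕ → ℕ → ℝ → ℝ
  | 0, 0 => fun _ => 1
  | 0, _ + 1 => fun _ => 0
  | _ + 1, 0 => fun _ => 0
  | k + 1, j + 1 => fun x =>
      Xop φ (Xcoeff φ k (j + 1)) x + ((j + 1 : ℕ) : ℝ) * deriv φ x * Xcoeff φ k (j + 1) x +
        Xcoeff φ k j x

lemma Xcoeff_of_lt {k j : ℕ} (h : k < j) : Xcoeff φ k j = fun _ => 0 := by
  induction k generalizing j with
  | zero => obtain ⟨j, rfl⟩ := Nat.exists_eq_add_of_lt h; rfl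
  | succ k ih =>
    obtain ⟨j, rfl⟩ : ∃ j', j = j' + 1 := ⟨j - 1, by omega⟩
    funext x
    simp [Xcoeff, ih (show k < j + 1 by omega), ih (show k < j by omega), Xop_const]

lemma Xcoeff_self (k : ℕ) : Xcoeff φ k k = fun _ => 1 := by
  induction k with
  | zero => rfl
  | succ k ih =>
    funext x
    simp [Xcoeff, ih, Xcoeff_of_lt k.lt_succ_self, Xop_const]

lemma Xop_Xcoeff_zero (k : ℕ) : Xop φ (Xcoeff φ k 0) = 0 := by
  rcases k with _ | k <;> exact Xop_const _

lemma Xcoeff_zero_mem_CN (k m : ℕ) : Xcoeff φ k 0 ∈ CN α β φ m := by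
  rcases k with _ | k <;> exact const_mem_CN m _

lemma Xcoeff_mem_CN {p : ℕ} (hp : deriv φ ∈ CN α β φ p) {k j m : ℕ}
    (h : k + m ≤ p + 1 + j) : Xcoeff φ k j ∈ CN α β φ m := by
  induction k generalizing j m with
  | zero => rcases j with _ | j <;> exact const_mem_CN m _
  | succ k ih =>
    rcases j with _ | j
    · exact Xcoeff_zero_mem_CN _ m
    rcases lt_or_ge k (j + 1) with hkj | hjk
    · rcases Nat.lt_succ_iff_lt_or_eq.mp hkj with hkj | rfl
      · simpa only [Xcoeff_of_lt (Nat.succ_lt_succ hkj)] using const_mem_CN m 0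
      · simpa only [Xcoeff_self] using const_mem_CN m 1
    have hnext : Xcoeff φ k (j + 1) ∈ CN α β φ (m + 1) := ih (by omega)
    have hφ' : deriv φ ∈ CN α β φ m := CN_antitone (by omega) hp
    exact add_mem_CN (add_mem_CN (Xop_mem_CN hnext)
      (mul_mem_CN (mul_mem_CN (const_mem_CN m _) hφ') (CN_antitone m.le_succ hnext)))
      (ih (by omega))

lemma Xcoeff_contExt {p : ℕ} (hp : deriv φ ∈ CN α β φ p) {k : ℕ} (hk : k ≤ p + 2) (j : ℕ) :
    ContExt α β (Xcoeff φ k j) := by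
  rcases j with _ | j
  · exact contExt_of_mem_CN (Xcoeff_zero_mem_CN k 0)
  · exact contExt_of_mem_CN (Xcoeff_mem_CN (j := j + 1) (m := 0) hp (by omega))

lemma Xcoeff_differentiableAt {p : ℕ} (hp : deriv φ ∈ CN α β φ p) {k : ℕ} (hk : k ≤ p + 1)
    (j : ℕ) {x : ℝ} (hx : x ∈ EI α β) : DifferentiableAt ℝ (Xcoeff φ k j) x := by
  rcases j with _ | j
  · exact differentiableAt_of_mem_CN (Xcoeff_zero_mem_CN k 1) hx
  · exact differentiableAt_of_mem_CN (Xcoeff_mem_CN (j := j + 1) (m := 1) hp (by omega)) hx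

lemma differentiableAt_mul_iff_of_ne_zero {𝕜 : Type*} [NontriviallyNormedField 𝕜] {f g : 𝕜 → 𝕜}
    {x : 𝕜} (hg : DifferentiableAt 𝕜 g x) (hgx : g x ≠ 0) :
    DifferentiableAt 𝕜 (fun y => g y * f y) x ↔ DifferentiableAt 𝕜 f x := by
  refine ⟨fun hgf => ?_, hg.mul⟩
  have hg_ne : ∀ᶠ y in 𝓝 x, g y ≠ 0 := hg.continuousAt.eventually_ne hgx
  refine ((hg.inv hgx).mul hgf).congr_of_eventuallyEq ?_
  filter_upwards [hg_ne] with y hy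
  exact (inv_mul_cancel_left₀ hy (f y)).symm

lemma differentiableAt_weightedDeriv {u : ℝ → ℝ} {j : ℕ} {x : ℝ} (hφ : DifferentiableAt ℝ φ x)
    (hu : DifferentiableAt ℝ (iteratedDeriv j u) x) :
    DifferentiableAt ℝ (weightedDeriv φ u j) x :=
  (hφ.fun_pow j).mul hu

lemma Finset.sum_range_shift_of_eq_zero {M : Type*} [AddCommMonoid M] {f : ℕ → M} {n : ℕ}
    (h₀ : f 0 = 0) (hn : f n = 0) : ∑ j ∈ range n, f (j + 1) = ∑ j ∈ range n, f j := by
  have h := sum_range_succ' f n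
  rw [sum_range_succ, h₀, hn, add_zero, add_zero] at h
  exact h.symm

lemma Xiter_eqOn_sum (hφ : ∀ x ∈ EI α β, DifferentiableAt ℝ φ x) {p : ℕ}
    (hp : deriv φ ∈ CN α β φ p) {u : ℝ → ℝ} {k : ℕ} (hk : k ≤ p + 2)
    (hu : ∀ i < k, ∀ x ∈ EI α β, DifferentiableAt ℝ (iteratedDeriv i u) x) :
    EqOn (Xiter φ k u)
      (fun x => ∑ j ∈ Finset.range (k + 1), Xcoeff φ k j x * weightedDeriv φ u j x) (EI α β) := by
  induction k with
  | zero => intro x _; simp [Xiter, Xcoeff, weightedDeriv]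
  | succ k ih =>
    intro x hx
    set T : ℕ → ℝ := fun j =>
      (Xop φ (Xcoeff φ k j) x + j * deriv φ x * Xcoeff φ k j x) * weightedDeriv φ u j x
    have hT_zero : T 0 = 0 := by simp [T, Xop_Xcoeff_zero]
    have hT_succ : T (k + 1) = 0 := by simp [T, Xcoeff_of_lt k.lt_succ_self, Xop_const]
    have hw : ∀ j ∈ Finset.range (k + 1), DifferentiableAt ℝ (iteratedDeriv j u) x :=
      fun j hj => hu j (Finset.mem_range.mp hj) x hx
    have hterm : ∀ j ∈ Finset.range (k + 1),
        Xop φ (fun y => Xcoeff φ k j y * weightedDeriv φ u j y) x =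
          T j + Xcoeff φ k j x * weightedDeriv φ u (j + 1) x := fun j hj => by
      rw [Xop_mul_apply (Xcoeff_differentiableAt hp (by omega) j hx)
        (differentiableAt_weightedDeriv (hφ x hx) (hw j hj)),
        Xop_weightedDeriv_apply (hφ x hx) (hw j hj)]
      ring
    calc Xiter φ (k + 1) u x
        = Xop φ (fun y => ∑ j ∈ Finset.range (k + 1), Xcoeff φ k j y * weightedDeriv φ u j y) x :=
          Xop_congr (ih (by omega) fun i hi => hu i (by omega)) hx
      _ = ∑ j ∈ Finset.range (k + 1), (T j + Xcoeff φ k j x * weightedDeriv φ u (j + 1) x) := by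
          rw [Xop_sum_apply (f := fun j y => Xcoeff φ k j y * weightedDeriv φ u j y) _
            fun j hj => (Xcoeff_differentiableAt hp (by omega) j hx).mul
              (differentiableAt_weightedDeriv (hφ x hx) (hw j hj))]
          exact Finset.sum_congr rfl hterm
      _ = ∑ j ∈ Finset.range (k + 1),
            (T (j + 1) + Xcoeff φ k j x * weightedDeriv φ u (j + 1) x) := by
          rw [Finset.sum_add_distrib, Finset.sum_add_distrib,
            Finset.sum_range_shift_of_eq_zero hT_zero hT_succ]
      _ = ∑ j ∈ Finset.range (k + 1 + 1), Xcoeff φ (k + 1) j x * weightedDeriv φ u j x := by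
          rw [Finset.sum_range_succ' _ (k + 1)]
          simp only [Xcoeff, zero_mul, add_zero]
          exact Finset.sum_congr rfl fun j _ => by simp only [T]; ring

lemma Xiter_eqOn_add_sum (hφ : ∀ x ∈ EI α β, DifferentiableAt ℝ φ x) {p : ℕ}
    (hp : deriv φ ∈ CN α β φ p) {u : ℝ → ℝ} {k : ℕ} (hk : k ≤ p + 2)
    (hu : ∀ i < k, ∀ x ∈ EI α β, DifferentiableAt ℝ (iteratedDeriv i u) x) :
    EqOn (Xiter φ k u)
      (fun x =>
        weightedDeriv φ u k x + ∑ j ∈ Finset.range k, Xcoeff φ k j x * weightedDeriv φ u j x)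
      (EI α β) := fun x hx => by
  rw [Xiter_eqOn_sum hφ hp hk hu hx]
  dsimp only
  rw [Finset.sum_range_succ, Xcoeff_self, one_mul, add_comm]

lemma differentiableAt_Xiter_iff (hφ : ∀ x ∈ EI α β, DifferentiableAt ℝ φ x)
    (hφpos : ∀ x ∈ EI α β, 0 < φ x) {p : ℕ} (hp : deriv φ ∈ CN α β φ p) {u : ℝ → ℝ} {n : ℕ}
    (hn : n ≤ p + 1) (hu : ∀ i < n, ∀ x ∈ EI α β, DifferentiableAt ℝ (iteratedDeriv i u) x)
    {x : ℝ} (hx : x ∈ EI α β) :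
    DifferentiableAt ℝ (Xiter φ n u) x ↔ DifferentiableAt ℝ (iteratedDeriv n u) x := by
  have hlower : DifferentiableAt ℝ
      (fun y => ∑ j ∈ Finset.range n, Xcoeff φ n j y * weightedDeriv φ u j y) x :=
    DifferentiableAt.fun_sum fun j hj => (Xcoeff_differentiableAt hp hn j hx).mul
      (differentiableAt_weightedDeriv (hφ x hx) (hu j (Finset.mem_range.mp hj) x hx))
  rw [((Xiter_eqOn_add_sum hφ hp (by omega) hu).eventuallyEq_of_mem_EI hx).differentiableAt_iff,
    hlower.fun_add_iff_left]
  exact differentiableAt_mul_iff_of_ne_zero ((hφ x hx).fun_pow n) (pow_ne_zero n (hφpos x hx).ne')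

lemma contExt_Xiter_iff (hφ : ∀ x ∈ EI α β, DifferentiableAt ℝ φ x) {p : ℕ}
    (hp : deriv φ ∈ CN α β φ p) {u : ℝ → ℝ} {n : ℕ} (hn : n ≤ p + 2)
    (hu : ∀ i < n, ∀ x ∈ EI α β, DifferentiableAt ℝ (iteratedDeriv i u) x)
    (hlow : ∀ j < n, ContExt α β (weightedDeriv φ u j)) :
    ContExt α β (Xiter φ n u) ↔ ContExt α β (weightedDeriv φ u n) := by
  have hlower : ContExt α β
      (fun y => ∑ j ∈ Finset.range n, Xcoeff φ n j y * weightedDeriv φ u j y) :=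
    ContExt.sum _ fun j hj => (Xcoeff_contExt hp hn j).mul (hlow j (Finset.mem_range.mp hj))
  have hexp := Xiter_eqOn_add_sum hφ hp hn hu
  refine ⟨fun h => (h.sub hlower).congr fun x hx => ?_,
    fun h => (h.add hlower).congr fun x hx => (hexp hx).symm⟩
  dsimp only
  rw [hexp hx]
  exact add_sub_cancel_right _ _

lemma Xiter_succ_conditions_iff (hφ : ∀ x ∈ EI α β, DifferentiableAt ℝ φ x)
    (hφpos : ∀ x ∈ EI α β, 0 < φ x) {p : ℕ} (hp : deriv φ ∈ CN α β φ p) {u : ℝ → ℝ} {n : ℕ}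
    (hn : n ≤ p + 1)
    (hu : ∀ k ≤ n, (∀ i < k, ∀ x ∈ EI α β, DifferentiableAt ℝ (iteratedDeriv i u) x) ∧
      ContExt α β (weightedDeriv φ u k)) :
    ((∀ x ∈ EI α β, DifferentiableAt ℝ (Xiter φ n u) x) ∧ ContExt α β (Xiter φ (n + 1) u)) ↔
      (∀ i < n + 1, ∀ x ∈ EI α β, DifferentiableAt ℝ (iteratedDeriv i u) x) ∧
        ContExt α β (weightedDeriv φ u (n + 1)) := by
  have hlow := (hu n le_rfl).1
  have hdiff_iff : (∀ x ∈ EI α β, DifferentiableAt ℝ (Xiter φ n u) x) ↔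
      ∀ i < n + 1, ∀ x ∈ EI α β, DifferentiableAt ℝ (iteratedDeriv i u) x := by
    rw [Nat.forall_lt_succ_right, and_iff_right hlow]
    exact forall₂_congr fun x hx => differentiableAt_Xiter_iff hφ hφpos hp hn hlow hx
  rw [hdiff_iff]
  exact and_congr_right fun hdiff =>
    contExt_Xiter_iff hφ hp (by omega) hdiff fun j hj => (hu j (by omega)).2

theorem mem_CN_iff_powers_general (α β : EReal) (φ : ℝ → ℝ)
    (hφpos : ∀ x ∈ EI α β, 0 < φ x)
    (n : ℕ)
    (hφ' : 2 ≤ n → (∀ x ∈ EI α β, DifferentiableAt ℝ φ x) ∧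
      deriv φ ∈ CN α β φ (n - 2))
    (u : ℝ → ℝ) :
    u ∈ CN α β φ n ↔
      ∀ k ≤ n,
        (∀ i < k, ∀ x ∈ EI α β, DifferentiableAt ℝ (iteratedDeriv i u) x) ∧
          ContExt α β (fun x => φ x ^ k * iteratedDeriv k u x) := by
  induction n generalizing u with
  | zero => simp [CN]
  | succ n ih =>
    have hu_iff := ih (fun h => ⟨(hφ' (by omega)).1, CN_antitone (by omega) (hφ' (by omega)).2⟩) u
    rw [Nat.forall_le_succ_iff, ← hu_iff]
    refine and_congr_right fun hu => ?_
    rcases n with _ | n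
    · simp only [Xiter, zero_add, pow_one, iteratedDeriv_one, Nat.lt_one_iff, forall_eq,
        iteratedDeriv_zero]
      rfl
    · obtain ⟨hφd, hp⟩ := hφ' (by omega)
      exact Xiter_succ_conditions_iff hφd hφpos hp le_rfl (hu_iff.mp hu)

/-- assume `φ′` extends to a function on `[α,β]` belonging to `C_φ^{(n−2)}`
whenever `n ≥ 2`.  Then `u ∈ C_φ^{(n)}` iff for each `k = 0, …, n` the function `u` is
`k`-times differentiable on `(α,β)` and `φ^k ∂_t^k u` extends to a continuous function
on `[α,β]`. -/
theorem mem_CN_iff_powers (α β : EReal) (hαβ : α < β) (φ : ℝ → ℝ)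
    (hφc : ContinuousOn φ (EI α β)) (hφpos : ∀ x ∈ EI α β, 0 < φ x)
    (n : ℕ)
    (hφ' : 2 ≤ n → (∀ x ∈ EI α β, DifferentiableAt ℝ φ x) ∧
      deriv φ ∈ CN α β φ (n - 2))
    (u : ℝ → ℝ) :
    u ∈ CN α β φ n ↔
      ∀ k ≤ n,
        (∀ i < k, ∀ x ∈ EI α β, DifferentiableAt ℝ (iteratedDeriv i u) x) ∧
          ContExt α β (fun x => φ x ^ k * iteratedDeriv k u x) :=
  mem_CN_iff_powers_general α β φ hφpos n hφ' u
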